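/- arXiv:2101.11106 — 4 statements merged into one kernel-verified Lean document; each statement's English description precedes it below -/
import Mathlib

section
/- Let X be a compact Hausdorff topological space. Every ℝ-algebra homomorphism φ : C(X,ℝ) → ℝ is evaluation at a unique point: there exists a unique x ∈ X such that φ(f) = f(x) for all f ∈ C(X,ℝ). -/
open WeakDual CharacterSpace

theorem WeakDual.CharacterSpace.continuousMapEval_eq_iff {X 𝕜 : Type*} [TopologicalSpace X]
    [CommRing 𝕜] [TopologicalSpace 𝕜] [IsTopologicalRing 𝕜] [Nontrivial 𝕜] [NoZeroDivisors 𝕜]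
    (x : X) (χ : characterSpace 𝕜 C(X, 𝕜)) :
    continuousMapEval X 𝕜 x = χ ↔ ∀ f : C(X, 𝕜), χ f = f x := by
  refine ⟨fun h f => by rw [← h, continuousMapEval_apply_apply], fun h => ?_⟩
  ext f
  exact (h f).symm

theorem ContinuousMap.existsUnique_algHom_eq_eval {X 𝕜 : Type*} [TopologicalSpace X]
    [CompactSpace X] [T2Space X] [RCLike 𝕜] (φ : C(X, 𝕜) →ₐ[𝕜] 𝕜) :
    ∃! x : X, ∀ f : C(X, 𝕜), φ f = f x := by
  simpa only [continuousMapEval_eq_iff, equivAlgHom_symm_coe] using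
    (continuousMapEval_bijective X 𝕜).existsUnique (equivAlgHom.symm φ)

/-- For a compact Hausdorff space `X`, every `ℝ`-algebra homomorphism `C(X,ℝ) → ℝ`
is evaluation at a unique point of `X`. -/
theorem stmt1 (X : Type*) [TopologicalSpace X] [CompactSpace X] [T2Space X]
    (φ : C(X, ℝ) →ₐ[ℝ] ℝ) :
    ∃! x : X, ∀ f : C(X, ℝ), φ f = f x :=
  ContinuousMap.existsUnique_algHom_eq_eval φ
end

section
/- A topological space X is pseudocompact if and only if X contains no C-embedded copy of ℕ; that is, every continuous real-valued function on X is bounded if and only if there is no injective topological embedding e : ℕ → X (ℕ carrying the discrete topology) whose image D = e(ℕ) is C-embedded in X. -/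
/-!
A C-embedded copy `{e n}` of `ℕ` carries an unbounded continuous function: extend `e n ↦ n`.
Conversely, if `f` is continuous and unbounded, pick points `x n` whose values `f (x n)` are
pairwise at distance at least `1`. Then `n ↦ f (x n)` is a closed embedding of `ℕ` into `ℝ`, so
`{x n}` is a copy of `ℕ`, and any function on it extends by Tietze's theorem on `ℝ` followed by
composition with `f`.
-/

open Set Topology Bornology

def IsCEmbedded {X : Type*} [TopologicalSpace X] (s : Set X) : Prop :=
  ∀ f : s → ℝ, Continuous f → ∃ F : X → ℝ, Continuous F ∧ ∀ d : s, F d = f d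

theorem exists_continuous_not_isBounded_range_of_isCEmbedded {X : Type*} [TopologicalSpace X]
    {e : ℕ → X} (he : IsEmbedding e) (hC : IsCEmbedded (range e)) :
    ∃ F : X → ℝ, Continuous F ∧ ¬IsBounded (range F) := by
  have : DiscreteTopology (range e) := he.toHomeomorph.symm.isEmbedding.discreteTopology
  obtain ⟨F, hF, hFe⟩ :=
    hC (fun d ↦ ((Function.invFun e (d : X) : ℕ) : ℝ)) continuous_of_discreteTopology
  have hF_nat (n : ℕ) : F (e n) = n := by
    simpa [Function.leftInverse_invFun he.injective n] using hFe ⟨e n, n, rfl⟩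
  refine ⟨F, hF, fun hbdd ↦ ?_⟩
  obtain ⟨C, hFC⟩ := isBounded_iff_forall_norm_le.mp hbdd
  obtain ⟨n, hn⟩ := exists_nat_gt C
  have := hFC (F (e n)) ⟨e n, rfl⟩
  rw [hF_nat, Real.norm_natCast] at this
  linarith

theorem exists_seq_pairwise_one_le_dist_of_not_isBounded {α : Type*} [PseudoMetricSpace α]
    {s : Set α} (hs : ¬IsBounded s) :
    ∃ u : ℕ → α, (∀ n, u n ∈ s) ∧ Pairwise fun m n ↦ 1 ≤ dist (u m) (u n) := by
  have : Std.Symm fun x y : α ↦ 1 ≤ dist x y := ⟨fun x y h ↦ by rwa [dist_comm]⟩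
  refine exists_seq_of_forall_finset_exists' (· ∈ s) (fun x y ↦ 1 ≤ dist x y) fun t _ ↦ ?_
  have hbdd : IsBounded (⋃ x ∈ t, Metric.ball x 1) :=
    (isBounded_biUnion_finset t).mpr fun x _ ↦ Metric.isBounded_ball
  obtain ⟨y, hys, hyt⟩ := not_subset.mp fun h ↦ hs (hbdd.subset h)
  simp only [mem_iUnion, Metric.mem_ball, not_exists, not_lt] at hyt
  exact ⟨y, hys, fun x hx ↦ dist_comm y x ▸ hyt x hx⟩

theorem isCEmbedded_range_of_isClosedEmbedding_comp {ι X Y : Type*} [TopologicalSpace ι]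
    [TopologicalSpace X] [TopologicalSpace Y] [NormalSpace Y] {e : ι → X} {f : X → Y}
    (he : Continuous e) (hf : Continuous f) (hfe : IsClosedEmbedding (f ∘ e)) :
    IsCEmbedded (range e) := by
  intro g hg
  obtain ⟨G, hG⟩ := ContinuousMap.exists_extension hfe
    ⟨g ∘ rangeFactorization e, hg.comp (he.codRestrict _)⟩
  refine ⟨G ∘ f, G.continuous.comp hf, ?_⟩
  rintro ⟨_, i, rfl⟩
  exact DFunLike.congr_fun hG i

theorem exists_isEmbedding_isCEmbedded_of_not_isBounded_range {X : Type*} [TopologicalSpace X]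
    {f : X → ℝ} (hf : Continuous f) (hunb : ¬IsBounded (range f)) :
    ∃ e : ℕ → X, IsEmbedding e ∧ IsCEmbedded (range e) := by
  obtain ⟨u, hu, hsep⟩ := exists_seq_pairwise_one_le_dist_of_not_isBounded hunb
  choose e he using hu
  have hfe : IsClosedEmbedding (f ∘ e) := by
    rw [show f ∘ e = u from funext he]
    exact Metric.isClosedEmbedding_of_pairwise_le_dist one_pos hsep
  exact ⟨e, hfe.isEmbedding.of_comp continuous_of_discreteTopology hf,
    isCEmbedded_range_of_isClosedEmbedding_comp continuous_of_discreteTopology hf hfe⟩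

/-- A topological space `X` is pseudocompact (every continuous real-valued function on `X`
is bounded) if and only if `X` contains no C-embedded copy of `ℕ` (the image of an
injective topological embedding of the discrete space `ℕ`, on which every real-valued
function extends continuously to `X`). -/
theorem stmt11 (X : Type*) [TopologicalSpace X] :
    (∀ f : X → ℝ, Continuous f → Bornology.IsBounded (Set.range f)) ↔
    ¬ ∃ e : ℕ → X, Topology.IsEmbedding e ∧
        ∀ f : Set.range e → ℝ, Continuous f →
          ∃ F : X → ℝ, Continuous F ∧ ∀ d : Set.range e, F (d : X) = f d := by
  constructor
  · rintro hbdd ⟨e, he, hC⟩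
    obtain ⟨F, hF, hunb⟩ := exists_continuous_not_isBounded_range_of_isCEmbedded he hC
    exact hunb (hbdd F hF)
  · intro hno f hf
    by_contra hunb
    exact hno (exists_isEmbedding_isCEmbedded_of_not_isBounded_range hf hunb)
end

section
/- Let X be a measurable space, φ : X → X a measurable map, and μ a φ-invariant probability measure on X (φ_*μ = μ). Then φ is ergodic with respect to μ if and only if μ is an extreme point of the set of φ-invariant probability measures: that is, if and only if for all φ-invariant probability measures μ₁, μ₂ and every real a with 0 < a < 1, the equality μ = a·μ₁ + (1−a)·μ₂ implies μ₁ = μ₂ = μ. -/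
/-!
If `μ` is ergodic and `μ = a • μ₁ + (1 - a) • μ₂`, then `μ₁ ≪ μ`, and the density of an
invariant `μ₁ ≪ μ` is a.e. invariant, hence a.e. constant. Conversely, an invariant set `B` with
`0 < μ B < 1` splits `μ` into its normalised restrictions to `B` and `Bᶜ`, both invariant.
-/

open MeasureTheory
open scoped ENNReal

lemma ENNReal.mem_openSegment_iff_ofReal {M : Type*} [AddCommMonoid M] [Module ℝ≥0∞ M]
    {x y z : M} :
    z ∈ openSegment ℝ≥0∞ x y ↔
      ∃ a : ℝ, 0 < a ∧ a < 1 ∧ ENNReal.ofReal a • x + ENNReal.ofReal (1 - a) • y = z := by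
  constructor
  · rintro ⟨a, b, ha, hb, hab, rfl⟩
    have ha_top : a ≠ ∞ := ne_top_of_le_ne_top one_ne_top (hab ▸ le_self_add)
    have ha_lt : a < 1 := hab ▸ ENNReal.lt_add_right ha_top hb.ne'
    have hb_eq : b = 1 - a := ENNReal.eq_sub_of_add_eq ha_top (by rwa [add_comm])
    refine ⟨a.toReal, ENNReal.toReal_pos ha.ne' ha_top,
      ENNReal.toReal_lt_of_lt_ofReal (by rwa [ENNReal.ofReal_one]), ?_⟩
    rw [ENNReal.ofReal_sub _ ENNReal.toReal_nonneg, ENNReal.ofReal_one,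
      ENNReal.ofReal_toReal ha_top, ← hb_eq]
  · rintro ⟨a, ha₀, ha₁, rfl⟩
    refine ⟨_, _, ENNReal.ofReal_pos.2 ha₀, ENNReal.ofReal_pos.2 (sub_pos.2 ha₁), ?_, rfl⟩
    rw [← ENNReal.ofReal_add ha₀.le (sub_pos.2 ha₁).le, add_sub_cancel, ENNReal.ofReal_one]

theorem Ergodic.iff_prob_eq_zero_or_one {X : Type*} [MeasurableSpace X]
    {f : X → X} {μ : Measure X} [IsProbabilityMeasure μ] (hf : MeasurePreserving f μ μ) :
    Ergodic f μ ↔ ∀ s, MeasurableSet s → f ⁻¹' s = s → μ s = 0 ∨ μ s = 1 := by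
  refine ⟨fun h s hs hfs => h.prob_eq_zero_or_one hs hfs, fun h => ⟨hf, ⟨fun s hs hfs => ?_⟩⟩⟩
  simpa [Filter.eventuallyConst_set', prob_compl_eq_zero_iff hs] using h s hs hfs

/-- A measure-preserving map `φ` of a probability space `(X, μ)` is ergodic (every
measurable strictly invariant set has measure `0` or `1`) if and only if `μ` is an
extreme point of the set of `φ`-invariant probability measures. -/
theorem stmt16 (X : Type*) [MeasurableSpace X] (φ : X → X) (hφ : Measurable φ)
    (μ : Measure X) [IsProbabilityMeasure μ] (hinv : μ.map φ = μ) :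
    (∀ B : Set X, MeasurableSet B → φ ⁻¹' B = B → μ B = 0 ∨ μ B = 1) ↔
    (∀ μ₁ μ₂ : Measure X, IsProbabilityMeasure μ₁ → IsProbabilityMeasure μ₂ →
      μ₁.map φ = μ₁ → μ₂.map φ = μ₂ → ∀ a : ℝ, 0 < a → a < 1 →
        μ = ENNReal.ofReal a • μ₁ + ENNReal.ofReal (1 - a) • μ₂ →
        μ₁ = μ ∧ μ₂ = μ) := by
  have hμ : MeasurePreserving φ μ μ := ⟨hφ, hinv⟩
  rw [← Ergodic.iff_prob_eq_zero_or_one hμ, Ergodic.iff_mem_extremePoints, mem_extremePoints]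
  refine ⟨fun h μ₁ μ₂ h₁ h₂ hφ₁ hφ₂ a ha₀ ha₁ hμ_eq => h.2 μ₁ ⟨⟨hφ, hφ₁⟩, h₁⟩ μ₂ ⟨⟨hφ, hφ₂⟩, h₂⟩
      (ENNReal.mem_openSegment_iff_ofReal.2 ⟨a, ha₀, ha₁, hμ_eq.symm⟩),
    fun h => ⟨⟨hμ, inferInstance⟩, ?_⟩⟩
  rintro μ₁ ⟨hφ₁, h₁⟩ μ₂ ⟨hφ₂, h₂⟩ hμ_mem
  obtain ⟨a, ha₀, ha₁, hμ_eq⟩ := ENNReal.mem_openSegment_iff_ofReal.1 hμ_mem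
  exact h μ₁ μ₂ h₁ h₂ hφ₁.map_eq hφ₂.map_eq a ha₀ ha₁ hμ_eq.symm
end

section
/- Let G be a locally compact, second countable Hausdorff topological group and H a closed subgroup of G. Then the quotient space G/H (with the quotient topology and its Borel σ-algebra, on which G acts by left translation) admits a unique invariant measure class: (i) there exists a nonzero σ-finite Borel measure μ on G/H that is quasi-invariant, meaning that for every g ∈ G the translate g_*μ and μ are mutually absolutely continuous; and (ii) any two nonzero σ-finite quasi-invariant Borel measures on G/H are mutually absolutely continuous (have the same null sets). -/
/-!
Fix a left Haar measure `m` on `G` and write `q : G → G ⧸ H` for the projection. For a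
quasi-invariant measure `μ` on `G ⧸ H` and a Borel set `E`, Fubini applied to
`{(g, x) | g • x ∈ E}` under `m × μ` compares the `μ`-measures of the translates `g⁻¹ • E`
with the `m`-measures of the sets `{g | g • x ∈ E}`. The latter are right translates of
`q ⁻¹' E`, and `m`-null sets are right-invariant, so `μ E = 0` if and only if `m (q ⁻¹' E) = 0`:
the null sets of `μ` do not depend on `μ`. For existence, `m.map q` is quasi-invariant but need
not be σ-finite, so one pushes forward a finite measure equivalent to `m` instead.
-/

open MeasureTheory

namespace MeasureTheory.Measure

variable {G X Y : Type*} [MeasurableSpace X] [MeasurableSpace Y]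

variable (G) in
def IsQuasiInvariant [SMul G X] (μ : Measure X) : Prop :=
  ∀ g : G, μ.map (fun x : X => g • x) ≪ μ ∧ μ ≪ μ.map (fun x : X => g • x)

section ConstSMul

variable [SMul G X] [MeasurableConstSMul G X] {μ ν : Measure X}

theorem isQuasiInvariant_of_smulInvariantMeasure [SMulInvariantMeasure G X μ] :
    IsQuasiInvariant G μ := fun g => by
  rw [MeasureTheory.map_smul]
  exact ⟨.rfl, .rfl⟩

theorem IsQuasiInvariant.of_absolutelyContinuous (hν : IsQuasiInvariant G ν) (hμν : μ ≪ ν)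
    (hνμ : ν ≪ μ) : IsQuasiInvariant G μ := fun g =>
  ⟨((hμν.map (measurable_const_smul g)).trans (hν g).1).trans hνμ,
    (hμν.trans (hν g).2).trans (hνμ.map (measurable_const_smul g))⟩

theorem IsQuasiInvariant.map [SMul G Y] [MeasurableConstSMul G Y] (hμ : IsQuasiInvariant G μ)
    {f : X → Y} (hf : Measurable f) (hequiv : ∀ (g : G) x, f (g • x) = g • f x) :
    IsQuasiInvariant G (μ.map f) := fun g => by
  have hcomm : (μ.map f).map (fun y : Y => g • y) = (μ.map (fun x : X => g • x)).map f := by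
    rw [Measure.map_map (measurable_const_smul g) hf, Measure.map_map hf (measurable_const_smul g)]
    exact congrArg (Measure.map · μ) (funext fun x => (hequiv g x).symm)
  rw [hcomm]
  exact ⟨(hμ g).1.map hf, (hμ g).2.map hf⟩

end ConstSMul

section Fubini

variable [MeasurableSpace G] [SMul G X] [MeasurableSMul₂ G X] (ρ : Measure G) [SFinite ρ]
  {μ : Measure X} [SFinite μ] {E : Set X}

theorem ae_measure_preimage_smul_eq_zero_iff (hE : MeasurableSet E) :
    (∀ᵐ g ∂ρ, μ ((fun x : X => g • x) ⁻¹' E) = 0) ↔ ∀ᵐ x ∂μ, ρ {g | g • x ∈ E} = 0 := by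
  have hA : MeasurableSet {p : G × X | p.1 • p.2 ∈ E} := measurable_smul hE
  calc (∀ᵐ g ∂ρ, μ ((fun x : X => g • x) ⁻¹' E) = 0)
      ↔ ρ.prod μ {p : G × X | p.1 • p.2 ∈ E} = 0 := (measure_prod_null hA).symm
    _ ↔ μ.prod ρ (Prod.swap ⁻¹' {p : G × X | p.1 • p.2 ∈ E}) = 0 := by
      rw [← prod_swap, map_apply measurable_swap hA]
    _ ↔ ∀ᵐ x ∂μ, ρ {g | g • x ∈ E} = 0 := measure_prod_null (measurable_swap hA)

theorem IsQuasiInvariant.ae_measure_smul_mem_eq_zero (hμ : IsQuasiInvariant G μ)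
    (hE : MeasurableSet E) (hμE : μ E = 0) : ∀ᵐ x ∂μ, ρ {g | g • x ∈ E} = 0 :=
  (ae_measure_preimage_smul_eq_zero_iff ρ hE).mp <| .of_forall fun g => by
    rw [← map_apply (measurable_const_smul g) hE]
    exact (hμ g).1 hμE

theorem IsQuasiInvariant.measure_eq_zero_of_forall_measure_smul_mem_eq_zero
    (hμ : IsQuasiInvariant G μ) (hρ : ρ ≠ 0) (hE : MeasurableSet E)
    (h : ∀ x, ρ {g | g • x ∈ E} = 0) : μ E = 0 := by
  have : (ae ρ).NeBot := ae_neBot.mpr hρ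
  obtain ⟨g, hg⟩ :=
    ((ae_measure_preimage_smul_eq_zero_iff (μ := μ) ρ hE).mpr (.of_forall h)).exists
  rw [← map_apply (measurable_const_smul g) hE] at hg
  exact (hμ g).2 hg

end Fubini

section Quotient

variable [Group G] [MeasurableSpace G] {H : Subgroup G}
  (m : Measure G) [SFinite m] [IsMulLeftInvariant m]

theorem measurable_quotientGroup_mk [MeasurableSpace (G ⧸ H)] [MeasurableSMul G (G ⧸ H)] :
    Measurable (QuotientGroup.mk : G → G ⧸ H) := by
  convert measurable_smul_const (M := G) ((1 : G) : G ⧸ H) with g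
  exact congrArg QuotientGroup.mk (mul_one g).symm

theorem measure_smul_mk_mem_eq_zero_iff [MeasurableMul₂ G] [MeasurableInv G] (a : G)
    (E : Set (G ⧸ H)) : m {g : G | g • (a : G ⧸ H) ∈ E} = 0 ↔ m (QuotientGroup.mk ⁻¹' E) = 0 :=
  measure_mul_right_null (s := QuotientGroup.mk ⁻¹' E) m a

theorem isQuasiInvariant_map_mk_toFinite [MeasurableMul G] [MeasurableSpace (G ⧸ H)]
    [MeasurableSMul G (G ⧸ H)] :
    IsQuasiInvariant G (m.toFinite.map (QuotientGroup.mk : G → G ⧸ H)) :=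
  ((isQuasiInvariant_of_smulInvariantMeasure (μ := m)).of_absolutelyContinuous
    (toFinite_absolutelyContinuous m) (absolutelyContinuous_toFinite m)).map
    measurable_quotientGroup_mk fun _ _ => rfl

variable [MeasurableMul₂ G] [MeasurableInv G] [MeasurableSpace (G ⧸ H)]
  [MeasurableSMul₂ G (G ⧸ H)] {μ ν : Measure (G ⧸ H)} [SFinite μ] [SFinite ν] {E : Set (G ⧸ H)}

theorem IsQuasiInvariant.measure_preimage_mk_eq_zero (hμ : IsQuasiInvariant G μ) (hμ0 : μ ≠ 0)
    (hE : MeasurableSet E) (hμE : μ E = 0) : m (QuotientGroup.mk ⁻¹' E) = 0 := by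
  have : (ae μ).NeBot := ae_neBot.mpr hμ0
  obtain ⟨x, hx⟩ := (hμ.ae_measure_smul_mem_eq_zero m hE hμE).exists
  induction x using QuotientGroup.induction_on with
  | H a => exact (measure_smul_mk_mem_eq_zero_iff m a E).mp hx

theorem IsQuasiInvariant.measure_eq_zero_of_measure_preimage_mk_eq_zero
    (hμ : IsQuasiInvariant G μ) (hm : m ≠ 0) (hE : MeasurableSet E)
    (hmE : m (QuotientGroup.mk ⁻¹' E) = 0) : μ E = 0 :=
  hμ.measure_eq_zero_of_forall_measure_smul_mem_eq_zero m hm hE fun x =>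
    QuotientGroup.induction_on x fun a => (measure_smul_mk_mem_eq_zero_iff m a E).mpr hmE

theorem IsQuasiInvariant.absolutelyContinuous (hm : m ≠ 0) (hμ : IsQuasiInvariant G μ)
    (hν : IsQuasiInvariant G ν) (hν0 : ν ≠ 0) : μ ≪ ν :=
  .mk fun _ hE hνE => hμ.measure_eq_zero_of_measure_preimage_mk_eq_zero m hm hE
    (hν.measure_preimage_mk_eq_zero m hν0 hE hνE)

end Quotient

end MeasureTheory.Measure

theorem stmt17_general (G : Type*) [Group G] [TopologicalSpace G] [IsTopologicalGroup G]
    [LocallyCompactSpace G] [SecondCountableTopology G]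
    (H : Subgroup G)
    [MeasurableSpace (G ⧸ H)] [BorelSpace (G ⧸ H)] :
    (∃ μ : Measure (G ⧸ H), μ ≠ 0 ∧ SigmaFinite μ ∧
      ∀ g : G, μ.map (fun x : G ⧸ H => g • x) ≪ μ ∧ μ ≪ μ.map (fun x : G ⧸ H => g • x)) ∧
    (∀ μ ν : Measure (G ⧸ H), μ ≠ 0 → ν ≠ 0 → SigmaFinite μ → SigmaFinite ν →
      (∀ g : G, μ.map (fun x : G ⧸ H => g • x) ≪ μ ∧ μ ≪ μ.map (fun x : G ⧸ H => g • x)) →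
      (∀ g : G, ν.map (fun x : G ⧸ H => g • x) ≪ ν ∧ ν ≪ ν.map (fun x : G ⧸ H => g • x)) →
      μ ≪ ν ∧ ν ≪ μ) := by
  borelize G
  set m : Measure G := Measure.haar
  have : IsProbabilityMeasure (m.toFinite.map (QuotientGroup.mk : G → G ⧸ H)) :=
    Measure.isProbabilityMeasure_map Measure.measurable_quotientGroup_mk.aemeasurable
  refine ⟨⟨_, IsProbabilityMeasure.ne_zero _, inferInstance,
    Measure.isQuasiInvariant_map_mk_toFinite m⟩, fun μ ν hμ0 hν0 _ _ hμ hν => ⟨?_, ?_⟩⟩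
  · exact Measure.IsQuasiInvariant.absolutelyContinuous m (NeZero.ne m) hμ hν hν0
  · exact Measure.IsQuasiInvariant.absolutelyContinuous m (NeZero.ne m) hν hμ hμ0

/-- For a locally compact second countable Hausdorff group `G` and a closed subgroup `H`,
the quotient `G/H` admits a unique invariant measure class: there is a nonzero σ-finite
quasi-invariant Borel measure, and any two nonzero σ-finite quasi-invariant Borel
measures on `G/H` are mutually absolutely continuous. -/
theorem stmt17 (G : Type*) [Group G] [TopologicalSpace G] [IsTopologicalGroup G]
    [LocallyCompactSpace G] [SecondCountableTopology G] [T2Space G]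
    (H : Subgroup G) (hH : IsClosed (H : Set G))
    [MeasurableSpace (G ⧸ H)] [BorelSpace (G ⧸ H)] :
    (∃ μ : Measure (G ⧸ H), μ ≠ 0 ∧ SigmaFinite μ ∧
      ∀ g : G, μ.map (fun x : G ⧸ H => g • x) ≪ μ ∧ μ ≪ μ.map (fun x : G ⧸ H => g • x)) ∧
    (∀ μ ν : Measure (G ⧸ H), μ ≠ 0 → ν ≠ 0 → SigmaFinite μ → SigmaFinite ν →
      (∀ g : G, μ.map (fun x : G ⧸ H => g • x) ≪ μ ∧ μ ≪ μ.map (fun x : G ⧸ H => g • x)) →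
      (∀ g : G, ν.map (fun x : G ⧸ H => g • x) ≪ ν ∧ ν ≪ ν.map (fun x : G ⧸ H => g • x)) →
      μ ≪ ν ∧ ν ≪ μ) :=
  stmt17_general G H
end
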